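/- Let X^{αβ} be a nonzero skew-symmetric 2-tensor on ℂ⁴ that is 'real' in the sense that X^{αγ}·conj(X)_{βγ} is a scalar multiple of the identity, where conj is a pseudo-hermitian conjugation of signature (2,2) composed with Hodge duality. If additionally ξ := X^{αβ}·conj(X)_{αβ} = 0, then X∧X = 0, i.e., X lies on the Klein quadric. -/

import Mathlib

/-!
With `ξ = 0` the reality condition says that every row `conj(X)_{b·}` of the conjugate tensor lies
in the kernel of the matrix `X`, and such a row is nonzero because `X` is. Hence `det X = 0`. For a
skew `4 × 4` matrix `det X = Pf(X)²`, while `(1/2) ε_{αβγδ} X^{αβ} X^{γδ} = 4 Pf(X)`.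
-/

open Finset

/-- The Levi-Civita symbol `ε_{abcd}` on `Fin 4`, via the product-of-differences
formula. -/
noncomputable def eps4 (a b c d : Fin 4) : ℂ :=
  ((((d : ℤ) - c) * ((d : ℤ) - b) * ((d : ℤ) - a) * ((c : ℤ) - b) * ((c : ℤ) - a) *
      ((b : ℤ) - a) : ℤ) : ℂ) / 12

/-- The signs of the (2,2)-signature conjugation on the orthonormal basis. -/
noncomputable def sgn4 : Fin 4 → ℂ := ![1, 1, -1, -1]

/-- The conjugate skew tensor with lowered indices:
`conj(X)_{αβ} = ε_α ε_β · conj(X^{αβ})`. -/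
noncomputable def Xlow (X : Fin 4 → Fin 4 → ℂ) (a b : Fin 4) : ℂ :=
  sgn4 a * sgn4 b * star (X a b)

/-- The real invariant `ξ = X^{αβ}·conj(X)_{αβ}`. -/
noncomputable def xiInv (X : Fin 4 → Fin 4 → ℂ) : ℂ :=
  ∑ a, ∑ b, X a b * Xlow X a b

open scoped Matrix

def pfaffian4 {R : Type*} [CommRing R] (X : Fin 4 → Fin 4 → R) : R :=
  X 0 1 * X 2 3 - X 0 2 * X 1 3 + X 0 3 * X 1 2

theorem det_eq_pfaffian4_sq {R : Type*} [CommRing R] {X : Fin 4 → Fin 4 → R}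
    (hdiag : ∀ a, X a a = 0) (hskew : ∀ a b, X b a = -X a b) :
    (Matrix.of X).det = pfaffian4 X ^ 2 := by
  rw [Matrix.det_succ_row_zero]
  simp only [Fin.sum_univ_succ, Matrix.det_fin_three, Matrix.of_apply, Matrix.submatrix_apply,
    Fin.succAbove, Fin.isValue, Fin.reduceSucc, Fin.reduceCastSucc, Fin.reduceLT, Fin.val_succ,
    Fin.val_zero, Fin.succ_pos, Fin.lt_one_iff, Fin.reduceEq, lt_self_iff_false, not_lt_zero,
    ↓reduceIte, univ_unique, Fin.default_eq_zero, sum_singleton, hdiag, hskew 0 1, hskew 0 2,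
    hskew 0 3, hskew 1 2, hskew 1 3, hskew 2 3, pfaffian4]
  ring

theorem wedge_self_eq_four_mul_pfaffian4 {X : Fin 4 → Fin 4 → ℂ}
    (hdiag : ∀ a, X a a = 0) (hskew : ∀ a b, X b a = -X a b) :
    (1 / 2 : ℂ) * ∑ a, ∑ b, ∑ c, ∑ d, eps4 a b c d * X a b * X c d = 4 * pfaffian4 X := by
  simp only [Fin.sum_univ_four, eps4, Fin.isValue, Fin.coe_ofNat_eq_mod, Nat.reduceMod, hdiag,
    hskew 0 1, hskew 0 2, hskew 0 3, hskew 1 2, hskew 1 3, hskew 2 3]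
  push_cast [pfaffian4]
  ring

lemma sgn4_ne_zero (a : Fin 4) : sgn4 a ≠ 0 := by
  fin_cases a <;> norm_num [sgn4]

lemma Xlow_eq_zero_iff {X : Fin 4 → Fin 4 → ℂ} {a b : Fin 4} : Xlow X a b = 0 ↔ X a b = 0 := by
  simp [Xlow, sgn4_ne_zero]

/-- If a nonzero skew tensor `X^{αβ}` is real, i.e.
`X^{αγ}·conj(X)_{βγ} = (ξ/4)·δ^α_β`, and `ξ = 0`, then `X∧X = 0`:
`X` lies on the Klein quadric. -/
theorem stmt8 (X : Fin 4 → Fin 4 → ℂ) (hX : X ≠ 0)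
    (hskew : ∀ a b, X b a = -X a b)
    (hreal : ∀ a b, (∑ c, X a c * Xlow X b c) =
      (xiInv X / 4) * (if a = b then 1 else 0))
    (hxi : xiInv X = 0) :
    (1 / 2 : ℂ) * ∑ a, ∑ b, ∑ c, ∑ d, eps4 a b c d * X a b * X c d = 0 := by
  have hdiag : ∀ a, X a a = 0 := fun a => self_eq_neg.mp (hskew a a)
  obtain ⟨b, hb⟩ : ∃ b, X b ≠ 0 := Function.ne_iff.mp hX
  have hrow : Xlow X b ≠ 0 := fun h => hb (funext fun c => Xlow_eq_zero_iff.mp (congrFun h c))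
  have hker : Matrix.of X *ᵥ Xlow X b = 0 :=
    funext fun a => by simpa [Matrix.mulVec, dotProduct, hxi] using hreal a b
  have hdet : (Matrix.of X).det = 0 := Matrix.exists_mulVec_eq_zero_iff.mp ⟨_, hrow, hker⟩
  rw [det_eq_pfaffian4_sq hdiag hskew, sq_eq_zero_iff] at hdet
  rw [wedge_self_eq_four_mul_pfaffian4 hdiag hskew, hdet, mul_zero]
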